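/- arXiv:2501.04576 — 2 statements merged into one kernel-verified Lean document; each statement's English description precedes it below -/
import Mathlib

section
/- Let h : ℝ → ℝ be a continuous 2π-periodic even function with ∫_{-π}^{π} h(θ)cos θ dθ = 0, and let C₁, C₂ ∈ ℝ, γ > 0, R₀ > 0, β > 0. Then there exist a 2π-periodic C² even function ρ and p₁ ∈ ℝ such that -γ(ρ + ρ'')/R₀² - β∫_{-π}^{π} ρ(θ)dθ - p₁ = h on ℝ, together with ∫_{-π}^{π} ρ(θ)dθ = C₁ and ∫_{-π}^{π} ρ(θ)cos θ dθ = C₂. -/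
/-!
With `g = -(R₀² / γ) (h + c)`, the constant `c` chosen so that `∫ g = C₁`, and `p₁ = c - β C₁`,
the equation becomes `ρ + ρ'' = g`. Variation of parameters solves it by an even function, which
is `2π`-periodic because `g sin` (odd) and `g cos` (by hypothesis) integrate to zero over a
period. Integrating `ρ'' + ρ = g` over a period gives `∫ ρ = ∫ g = C₁`, and adding a multiple
of `cos`, which solves the homogeneous equation and has mean zero, adjusts `∫ ρ cos` to `C₂`.
-/

open Real

open intervalIntegral

section Parity

variable {f : ℝ → ℝ}

theorem Function.Odd.intervalIntegral_neg_self (hf : Function.Odd f) (a : ℝ) :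
    ∫ x in -a..a, f x = 0 := by
  have h := integral_comp_neg (a := -a) (b := a) f
  simp only [hf.eq, integral_neg, neg_neg] at h
  linarith

theorem Function.Even.intervalIntegral_zero_neg (hf : Function.Even f) (x : ℝ) :
    ∫ t in 0..-x, f t = -∫ t in 0..x, f t := by
  have h := integral_comp_neg (a := 0) (b := x) f
  simp only [hf.eq, neg_zero] at h
  rw [h, integral_symm]

theorem Function.Odd.intervalIntegral_zero_neg (hf : Function.Odd f) (x : ℝ) :
    ∫ t in 0..-x, f t = ∫ t in 0..x, f t := by
  have h := integral_comp_neg (a := 0) (b := x) f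
  simp only [hf.eq, integral_neg, neg_zero] at h
  rw [integral_symm, ← h, neg_neg]

end Parity

theorem Function.Periodic.periodic_integral_of_integral_eq_zero {f : ℝ → ℝ} {T : ℝ}
    (hf : Function.Periodic f T) (hfi : ∀ a b, IntervalIntegrable f MeasureTheory.volume a b)
    (t : ℝ) (h0 : ∫ x in t..t + T, f x = 0) :
    Function.Periodic (fun x => ∫ s in 0..x, f s) T := fun x => by
  simp only [hf.intervalIntegral_add_eq_add 0 x hfi, hf.intervalIntegral_add_eq 0 t, h0, add_zero]

/-- Variation of parameters: `∫ t in 0..θ, g t * sin (θ - t)`, the solution of `P'' + P = g`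
with `P 0 = P' 0 = 0`. -/
noncomputable def harmonicSolution (g : ℝ → ℝ) (θ : ℝ) : ℝ :=
  sin θ * (∫ t in 0..θ, g t * cos t) - cos θ * ∫ t in 0..θ, g t * sin t

noncomputable def harmonicSolutionDeriv (g : ℝ → ℝ) (θ : ℝ) : ℝ :=
  cos θ * (∫ t in 0..θ, g t * cos t) + sin θ * ∫ t in 0..θ, g t * sin t

namespace harmonicSolution

variable {g : ℝ → ℝ}

theorem hasDerivAt (hg : Continuous g) (θ : ℝ) :
    HasDerivAt (harmonicSolution g) (harmonicSolutionDeriv g θ) θ := by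
  have hV : HasDerivAt (fun x => ∫ t in 0..x, g t * cos t) (g θ * cos θ) θ :=
    ((hg.mul continuous_cos).integral_hasStrictDerivAt 0 θ).hasDerivAt
  have hU : HasDerivAt (fun x => ∫ t in 0..x, g t * sin t) (g θ * sin θ) θ :=
    ((hg.mul continuous_sin).integral_hasStrictDerivAt 0 θ).hasDerivAt
  have h := ((hasDerivAt_sin θ).mul hV).sub ((hasDerivAt_cos θ).mul hU)
  exact h.congr_deriv (by simp only [harmonicSolutionDeriv]; ring)

theorem hasDerivAt_deriv (hg : Continuous g) (θ : ℝ) :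
    HasDerivAt (harmonicSolutionDeriv g) (g θ - harmonicSolution g θ) θ := by
  have hV : HasDerivAt (fun x => ∫ t in 0..x, g t * cos t) (g θ * cos θ) θ :=
    ((hg.mul continuous_cos).integral_hasStrictDerivAt 0 θ).hasDerivAt
  have hU : HasDerivAt (fun x => ∫ t in 0..x, g t * sin t) (g θ * sin θ) θ :=
    ((hg.mul continuous_sin).integral_hasStrictDerivAt 0 θ).hasDerivAt
  have h := ((hasDerivAt_cos θ).mul hV).add ((hasDerivAt_sin θ).mul hU)
  exact h.congr_deriv (by
    simp only [harmonicSolution]; linear_combination g θ * sin_sq_add_cos_sq θ)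

theorem deriv_eq (hg : Continuous g) : deriv (harmonicSolution g) = harmonicSolutionDeriv g :=
  funext fun θ => (hasDerivAt hg θ).deriv

theorem contDiff (hg : Continuous g) : ContDiff ℝ 2 (harmonicSolution g) := by
  have hP : Differentiable ℝ (harmonicSolution g) := fun θ => (hasDerivAt hg θ).differentiableAt
  have hQ : Differentiable ℝ (harmonicSolutionDeriv g) := fun θ =>
    (hasDerivAt_deriv hg θ).differentiableAt
  have hQ' : deriv (harmonicSolutionDeriv g) = fun θ => g θ - harmonicSolution g θ :=
    funext fun θ => (hasDerivAt_deriv hg θ).deriv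
  rw [show (2 : WithTop ℕ∞) = 1 + 1 by norm_num, contDiff_succ_iff_deriv, deriv_eq hg]
  exact ⟨hP, by simp, contDiff_one_iff_deriv.2 ⟨hQ, hQ' ▸ hg.sub hP.continuous⟩⟩

theorem even (hg : Function.Even g) : Function.Even (harmonicSolution g) := fun θ => by
  have hcos : Function.Even fun t => g t * cos t := hg.mul_even cos_neg
  have hsin : Function.Odd fun t => g t * sin t := hg.mul_odd sin_neg
  simp only [harmonicSolution, hcos.intervalIntegral_zero_neg, hsin.intervalIntegral_zero_neg,
    sin_neg, cos_neg]
  ring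

theorem periodic_primitives (hg : Continuous g) (hper : Function.Periodic g (2 * π))
    (heven : Function.Even g) (hcos : ∫ t in -π..π, g t * cos t = 0) :
    Function.Periodic (fun θ => ∫ t in 0..θ, g t * cos t) (2 * π) ∧
      Function.Periodic (fun θ => ∫ t in 0..θ, g t * sin t) (2 * π) := by
  have hperiod : (-π) + 2 * π = π := by ring
  constructor
  · refine Function.Periodic.periodic_integral_of_integral_eq_zero (fun t => by simp [hper t])
      (fun _ _ => (hg.mul continuous_cos).intervalIntegrable _ _) (-π) ?_
    rwa [hperiod]
  · refine Function.Periodic.periodic_integral_of_integral_eq_zero (fun t => by simp [hper t])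
      (fun _ _ => (hg.mul continuous_sin).intervalIntegrable _ _) (-π) ?_
    rw [hperiod]
    exact (heven.mul_odd sin_neg).intervalIntegral_neg_self π

theorem periodic (hg : Continuous g) (hper : Function.Periodic g (2 * π))
    (heven : Function.Even g) (hcos : ∫ t in -π..π, g t * cos t = 0) :
    Function.Periodic (harmonicSolution g) (2 * π) := fun θ => by
  obtain ⟨hV, hU⟩ := periodic_primitives hg hper heven hcos
  simp only [harmonicSolution, sin_add_two_pi, cos_add_two_pi, hV θ, hU θ]

theorem periodic_deriv (hg : Continuous g) (hper : Function.Periodic g (2 * π))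
    (heven : Function.Even g) (hcos : ∫ t in -π..π, g t * cos t = 0) :
    Function.Periodic (harmonicSolutionDeriv g) (2 * π) := fun θ => by
  obtain ⟨hV, hU⟩ := periodic_primitives hg hper heven hcos
  simp only [harmonicSolutionDeriv, sin_add_two_pi, cos_add_two_pi, hV θ, hU θ]

theorem integral_eq (hg : Continuous g)
    (hQ : Function.Periodic (harmonicSolutionDeriv g) (2 * π)) :
    ∫ θ in -π..π, harmonicSolution g θ = ∫ θ in -π..π, g θ := by
  have hP : Continuous (harmonicSolution g) :=
    continuous_iff_continuousAt.2 fun θ => (hasDerivAt hg θ).continuousAt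
  have hFTC : ∫ θ in -π..π, (g θ - harmonicSolution g θ) =
      harmonicSolutionDeriv g π - harmonicSolutionDeriv g (-π) :=
    integral_eq_sub_of_hasDerivAt (fun θ _ => hasDerivAt_deriv hg θ)
      ((hg.sub hP).intervalIntegrable _ _)
  have hends : harmonicSolutionDeriv g π = harmonicSolutionDeriv g (-π) := by
    simpa [show -π + 2 * π = π by ring] using hQ (-π)
  rw [integral_sub (hg.intervalIntegrable _ _) (hP.intervalIntegrable _ _), hends,
    sub_self] at hFTC
  linarith

end harmonicSolution

theorem exists_even_periodic_solution {g : ℝ → ℝ} (hg : Continuous g)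
    (hper : Function.Periodic g (2 * π)) (heven : Function.Even g)
    (hcos : ∫ t in -π..π, g t * cos t = 0) (C : ℝ) :
    ∃ ρ : ℝ → ℝ, ContDiff ℝ 2 ρ ∧ Function.Periodic ρ (2 * π) ∧ Function.Even ρ ∧
      (∀ θ, ρ θ + deriv (deriv ρ) θ = g θ) ∧
      (∫ θ in -π..π, ρ θ) = ∫ θ in -π..π, g θ ∧ (∫ θ in -π..π, ρ θ * cos θ) = C := by
  have hPper := harmonicSolution.periodic hg hper heven hcos
  have hPeven := harmonicSolution.even heven
  have hPint := harmonicSolution.integral_eq hg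
    (harmonicSolution.periodic_deriv hg hper heven hcos)
  have hP : Continuous (harmonicSolution g) := (harmonicSolution.contDiff hg).continuous
  set P := harmonicSolution g
  set A := (C - ∫ θ in -π..π, P θ * cos θ) / π with hA
  have hρ : ∀ θ, HasDerivAt (fun x => P x + A * cos x)
      (harmonicSolutionDeriv g θ - A * sin θ) θ :=
    fun θ => (harmonicSolution.hasDerivAt hg θ).add ((hasDerivAt_cos θ).const_mul A)
      |>.congr_deriv (by ring)
  have hρ' : ∀ θ, HasDerivAt (fun x => harmonicSolutionDeriv g x - A * sin x)
      (g θ - (P θ + A * cos θ)) θ :=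
    fun θ => (harmonicSolution.hasDerivAt_deriv hg θ).sub ((hasDerivAt_sin θ).const_mul A)
      |>.congr_deriv (by ring)
  refine ⟨fun θ => P θ + A * cos θ,
    (harmonicSolution.contDiff hg).add (contDiff_const.mul contDiff_cos),
    fun θ => ?_, fun θ => ?_, fun θ => ?_, ?_, ?_⟩
  · simp only [hPper θ, cos_add_two_pi]
  · simp only [hPeven θ, cos_neg]
  · rw [show deriv (fun x => P x + A * cos x) = _ from funext fun x => (hρ x).deriv,
      (hρ' θ).deriv]
    ring
  · rw [integral_add (f := P) (g := fun θ => A * cos θ) (hP.intervalIntegrable _ _)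
      ((continuous_const.mul continuous_cos).intervalIntegrable _ _),
      integral_const_mul, integral_cos, sin_neg, sin_pi, hPint]
    ring
  · simp only [add_mul, mul_assoc, ← sq]
    rw [integral_add (f := fun θ => P θ * cos θ) (g := fun θ => A * cos θ ^ 2)
      ((hP.mul continuous_cos).intervalIntegrable _ _)
      ((continuous_const.mul (continuous_cos.pow 2)).intervalIntegrable _ _),
      integral_const_mul, integral_cos_sq, sin_neg, sin_pi, hA]
    field_simp
    ring

theorem stmt4_general (γ R₀ β C₁ C₂ : ℝ) (hγ : 0 < γ) (hR₀ : 0 < R₀)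
    (h : ℝ → ℝ) (hcont : Continuous h)
    (hper : Function.Periodic h (2 * π))
    (heven : ∀ θ, h (-θ) = h θ)
    (hint : ∫ θ in (-π)..π, h θ * Real.cos θ = 0) :
    ∃ (ρ : ℝ → ℝ) (p₁ : ℝ),
      ContDiff ℝ 2 ρ ∧ Function.Periodic ρ (2 * π) ∧ (∀ θ, ρ (-θ) = ρ θ) ∧
      (∀ θ, -γ * (ρ θ + deriv (deriv ρ) θ) / R₀ ^ 2
          - β * (∫ θ' in (-π)..π, ρ θ') - p₁ = h θ) ∧
      (∫ θ in (-π)..π, ρ θ) = C₁ ∧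
      (∫ θ in (-π)..π, ρ θ * Real.cos θ) = C₂ := by
  obtain ⟨c, hc⟩ : ∃ c : ℝ, c = -(γ / R₀ ^ 2 * C₁ + ∫ θ in -π..π, h θ) / (2 * π) := ⟨_, rfl⟩
  have hgcos : ∫ θ in -π..π, -(R₀ ^ 2 / γ) * (h θ + c) * cos θ = 0 := by
    simp only [mul_assoc, add_mul]
    rw [integral_const_mul, integral_add (f := fun θ => h θ * cos θ) (g := fun θ => c * cos θ)
      ((hcont.mul continuous_cos).intervalIntegrable _ _)
      ((continuous_const.mul continuous_cos).intervalIntegrable _ _), integral_const_mul,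
      integral_cos, hint]
    simp
  have hgint : ∫ θ in -π..π, -(R₀ ^ 2 / γ) * (h θ + c) = C₁ := by
    rw [integral_const_mul, integral_add (hcont.intervalIntegrable _ _) intervalIntegrable_const,
      integral_const, smul_eq_mul, hc]
    field_simp
    ring
  obtain ⟨ρ, hρ2, hρper, hρeven, hρode, hρint, hρcos⟩ :=
    exists_even_periodic_solution (g := fun θ => -(R₀ ^ 2 / γ) * (h θ + c))
      (continuous_const.mul (hcont.add continuous_const))
      (fun θ => by simp only [hper θ]) (fun θ => by simp only [heven θ]) hgcos C₂
  refine ⟨ρ, c - β * C₁, hρ2, hρper, hρeven, fun θ => ?_, hρint.trans hgint, hρcos⟩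
  rw [hρode, hρint, hgint]
  field_simp
  ring

/-- Surjectivity part of the range characterization of the linearized operator:
for any continuous 2π-periodic even `h` with `∫ h cos = 0` and any `C₁, C₂`, there
exist a 2π-periodic even `C²` function `ρ` and `p₁ ∈ ℝ` with
`-γ(ρ+ρ'')/R₀² - β ∫ρ - p₁ = h`, `∫ρ = C₁` and `∫ρ cos = C₂`. -/
theorem stmt4 (γ R₀ β C₁ C₂ : ℝ) (hγ : 0 < γ) (hR₀ : 0 < R₀) (hβ : 0 < β)
    (h : ℝ → ℝ) (hcont : Continuous h)
    (hper : Function.Periodic h (2 * π))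
    (heven : ∀ θ, h (-θ) = h θ)
    (hint : ∫ θ in (-π)..π, h θ * Real.cos θ = 0) :
    ∃ (ρ : ℝ → ℝ) (p₁ : ℝ),
      ContDiff ℝ 2 ρ ∧ Function.Periodic ρ (2 * π) ∧ (∀ θ, ρ (-θ) = ρ θ) ∧
      (∀ θ, -γ * (ρ θ + deriv (deriv ρ) θ) / R₀ ^ 2
          - β * (∫ θ' in (-π)..π, ρ θ') - p₁ = h θ) ∧
      (∫ θ in (-π)..π, ρ θ) = C₁ ∧
      (∫ θ in (-π)..π, ρ θ * Real.cos θ) = C₂ :=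
  stmt4_general γ R₀ β C₁ C₂ hγ hR₀ h hcont hper heven hint
end

section
/- Let a > 0, c⁰ > 0, R₀ > 0, and let f'_act(c⁰) > 0, i.e., let m > 0 be given (representing a c⁰ f'_act(c⁰) R₀). There is no 2π-periodic C² function ρ : ℝ → ℝ and real p₁, β such that γ(ρ+ρ'')/R₀² + β∫_{-π}^π ρ dθ + p₁ = m cos θ on ℝ together with ∫_{-π}^π ρ dθ = ∫_{-π}^π ρ cos θ dθ = ∫_{-π}^π ρ sin θ dθ = 0. -/
/-!
Multiply the equation by `cos θ` and integrate over a period. Since `(ρ + ρ'') cos` has the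
periodic antiderivative `ρ' cos + ρ sin` and `∫ cos = 0`, the left-hand side integrates to `0`,
whereas `∫ m cos² = m π > 0`.
-/

open Real

theorem Function.Periodic.deriv {𝕜 F : Type*} [NontriviallyNormedField 𝕜] [NormedAddCommGroup F]
    [NormedSpace 𝕜 F] {f : 𝕜 → F} {c : 𝕜} (hf : Function.Periodic f c) :
    Function.Periodic (deriv f) c := fun x => by
  rw [← deriv_comp_add_const, hf.funext]

theorem continuous_add_deriv_deriv_mul_cos {ρ : ℝ → ℝ} (hρ : ContDiff ℝ 2 ρ) :
    Continuous fun θ => (ρ θ + deriv (deriv ρ) θ) * cos θ :=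
  (hρ.continuous.add ((hρ.deriv' (n := 1)).continuous_deriv le_rfl)).mul continuous_cos

theorem hasDerivAt_deriv_mul_cos_add_mul_sin {ρ : ℝ → ℝ} {θ : ℝ}
    (hρ : DifferentiableAt ℝ ρ θ) (hρ' : DifferentiableAt ℝ (deriv ρ) θ) :
    HasDerivAt (fun θ => deriv ρ θ * cos θ + ρ θ * sin θ)
      ((ρ θ + deriv (deriv ρ) θ) * cos θ) θ := by
  refine ((hρ'.hasDerivAt.fun_mul (hasDerivAt_cos θ)).fun_add
    (hρ.hasDerivAt.fun_mul (hasDerivAt_sin θ))).congr_deriv ?_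
  ring

theorem integral_add_deriv_deriv_mul_cos_eq_zero {ρ : ℝ → ℝ} (hρ : ContDiff ℝ 2 ρ)
    (hper : Function.Periodic ρ (2 * π)) (a : ℝ) :
    ∫ θ in a..a + 2 * π, (ρ θ + deriv (deriv ρ) θ) * cos θ = 0 := by
  rw [intervalIntegral.integral_eq_sub_of_hasDerivAt
    (fun θ _ => hasDerivAt_deriv_mul_cos_add_mul_sin (hρ.differentiable (by norm_num) θ)
      ((hρ.deriv' (n := 1)).differentiable one_ne_zero θ))
    ((continuous_add_deriv_deriv_mul_cos hρ).intervalIntegrable _ _)]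
  simp only [hper a, hper.deriv a, cos_add_two_pi, sin_add_two_pi, sub_self]

theorem stmt6_general (γ R₀ m : ℝ) (hm : 0 < m) :
    ¬ ∃ (ρ : ℝ → ℝ) (p₁ β : ℝ),
      ContDiff ℝ 2 ρ ∧ Function.Periodic ρ (2 * π) ∧
      (∀ θ, γ * (ρ θ + deriv (deriv ρ) θ) / R₀ ^ 2
          + β * (∫ θ' in (-π)..π, ρ θ') + p₁ = m * Real.cos θ) ∧
      (∫ θ in (-π)..π, ρ θ) = 0 ∧
      (∫ θ in (-π)..π, ρ θ * Real.cos θ) = 0 ∧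
      (∫ θ in (-π)..π, ρ θ * Real.sin θ) = 0 := by
  rintro ⟨ρ, p₁, β, hρ, hper, heq, -, -, -⟩
  set c := β * (∫ θ' in (-π)..π, ρ θ') + p₁
  have hzero := integral_add_deriv_deriv_mul_cos_eq_zero hρ hper (-π)
  rw [show -π + 2 * π = π by ring] at hzero
  have hmπ : m * π = 0 := calc
    m * π = ∫ θ in (-π)..π, m * cos θ ^ 2 := by
      rw [intervalIntegral.integral_const_mul, integral_cos_sq]; simp
    _ = ∫ θ in (-π)..π, γ / R₀ ^ 2 * ((ρ θ + deriv (deriv ρ) θ) * cos θ) + c * cos θ := by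
      congr 1; ext θ; rw [sq, ← mul_assoc, ← heq]; ring
    _ = 0 := by
      rw [intervalIntegral.integral_add
        (((continuous_add_deriv_deriv_mul_cos hρ).intervalIntegrable _ _).const_mul _)
        ((continuous_cos.intervalIntegrable _ _).const_mul _), intervalIntegral.integral_const_mul,
        intervalIntegral.integral_const_mul, hzero, integral_cos]
      simp
  exact (mul_pos hm pi_pos).ne' hmπ

/-- Transversality condition in the Crandall–Rabinowitz argument: for `γ, R₀, m > 0` there is
no 2π-periodic `C²` function `ρ` and reals `p₁, β` with
`γ(ρ+ρ'')/R₀² + β ∫ρ + p₁ = m cos θ` and `∫ρ = ∫ρ cos = ∫ρ sin = 0`. -/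
theorem stmt6 (γ R₀ m : ℝ) (hγ : 0 < γ) (hR₀ : 0 < R₀) (hm : 0 < m) :
    ¬ ∃ (ρ : ℝ → ℝ) (p₁ β : ℝ),
      ContDiff ℝ 2 ρ ∧ Function.Periodic ρ (2 * π) ∧
      (∀ θ, γ * (ρ θ + deriv (deriv ρ) θ) / R₀ ^ 2
          + β * (∫ θ' in (-π)..π, ρ θ') + p₁ = m * Real.cos θ) ∧
      (∫ θ in (-π)..π, ρ θ) = 0 ∧
      (∫ θ in (-π)..π, ρ θ * Real.cos θ) = 0 ∧
      (∫ θ in (-π)..π, ρ θ * Real.sin θ) = 0 :=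
  stmt6_general γ R₀ m hm
end
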